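/- arXiv:1809.07040 — 6 statements merged into one kernel-verified Lean document; each statement's English description precedes it below -/
import Mathlib

section
/- Equality case of the reverse Hölder inequality: Let p > 1 and let F, G be random variables with G ≠ 0 almost surely, with |F|^{1/p} and |G|^{-1/(p-1)} integrable and E[|F·G|] < ∞. Then E[|F·G|] = (E[|F|^{1/p}])^p · (E[|G|^{-1/(p-1)}])^{-(p-1)} holds if and only if there exists a deterministic constant α ≥ 0 such that |F| = α·|G|^{-p/(p-1)} almost surely. -/
/-!
With `f = |F| ^ (1 / p)` and `g = |G| ^ (-1 / (p - 1))` one has `|F G| = f ^ p g ^ (1 - p)`.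
Under the finite measure `ν = g • μ` this is `∫ (f / g) ^ p dν`, while `∫ f dμ = ∫ f / g dν` and
`∫ g dμ = ν Ω`. So the reverse Hölder inequality is Jensen's inequality for the strictly convex
`t ↦ t ^ p` under `ν`, with equality exactly when `f / g` is `ν`-a.e. constant, i.e. when `|F|` is
a constant multiple of `g ^ p = |G| ^ (-p / (p - 1))`.
-/

open MeasureTheory Real

namespace MeasureTheory

variable {α : Type*} [MeasurableSpace α] {p : ℝ}

theorem integral_rpow_eq_iff_ae_eq_const {ν : Measure α} [IsFiniteMeasure ν] [NeZero ν]
    (hp : 1 < p) {h : α → ℝ} (h0 : 0 ≤ᵐ[ν] h) (hi : Integrable h ν)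
    (hpi : Integrable (fun x => h x ^ p) ν) :
    ∫ x, h x ^ p ∂ν = (∫ x, h x ∂ν) ^ p * ν.real Set.univ ^ (1 - p) ↔
      ∃ a, h =ᵐ[ν] fun _ => a := by
  have hm := measureReal_univ_pos (μ := ν)
  have hint : 0 ≤ ∫ x, h x ∂ν := integral_nonneg_of_ae h0
  have hav : ∫ x, h x ^ p ∂ν = (∫ x, h x ∂ν) ^ p * ν.real Set.univ ^ (1 - p) ↔
      ⨍ x, h x ^ p ∂ν = (⨍ x, h x ∂ν) ^ p := by
    rw [average_eq, average_eq, smul_eq_mul, smul_eq_mul, mul_rpow (inv_nonneg.2 hm.le) hint,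
      inv_rpow hm.le, rpow_sub hm, rpow_one]
    field_simp
  rw [hav]
  constructor
  · intro heq
    have hcont : ContinuousOn (fun x : ℝ => x ^ p) (Set.Ici 0) := fun x _ =>
      (continuousAt_rpow_const x p (Or.inr (by linarith))).continuousWithinAt
    rcases (strictConvexOn_rpow hp).ae_eq_const_or_map_average_lt hcont isClosed_Ici h0 hi hpi
      with hconst | hlt
    · exact ⟨_, hconst⟩
    · exact absurd heq hlt.ne'
  · rintro ⟨a, ha⟩
    have hap : (fun x => h x ^ p) =ᵐ[ν] fun _ => a ^ p := ha.fun_comp (· ^ p)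
    rw [average_congr ha, average_congr hap, average_const, average_const]

theorem ae_withDensity_ofReal_eq_ae {μ : Measure α} {g : α → ℝ} (hg : AEMeasurable g μ)
    (hg0 : ∀ᵐ x ∂μ, 0 < g x) : ae (μ.withDensity fun x => ENNReal.ofReal (g x)) = ae μ := by
  ext s
  refine (ae_withDensity_iff' hg.ennreal_ofReal).trans ⟨fun hs => ?_, fun hs => ?_⟩
  · filter_upwards [hs, hg0] with x hx hgx using hx (ENNReal.ofReal_pos.2 hgx).ne'
  · filter_upwards [hs] with x hx using fun _ => hx

theorem integral_rpow_mul_rpow_one_sub_eq_iff {μ : Measure α} [NeZero μ] (hp : 1 < p)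
    {f g : α → ℝ} (hf0 : 0 ≤ᵐ[μ] f) (hg0 : ∀ᵐ x ∂μ, 0 < g x) (hf : Integrable f μ)
    (hg : Integrable g μ) (hfg : Integrable (fun x => f x ^ p * g x ^ (1 - p)) μ) :
    ∫ x, f x ^ p * g x ^ (1 - p) ∂μ = (∫ x, f x ∂μ) ^ p * (∫ x, g x ∂μ) ^ (1 - p) ↔
      ∃ k, 0 ≤ k ∧ f =ᵐ[μ] fun x => k * g x := by
  set ν := μ.withDensity fun x => ENNReal.ofReal (g x)
  have hgm := hg.aemeasurable.ennreal_ofReal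
  have hνμ : ae ν = ae μ := ae_withDensity_ofReal_eq_ae hg.aemeasurable hg0
  have hg_eq : ∀ᵐ x ∂μ, (ENNReal.ofReal (g x)).toReal = g x :=
    hg0.mono fun x hx => ENNReal.toReal_ofReal hx.le
  have integral_ν (u : α → ℝ) : ∫ x, u x ∂ν = ∫ x, g x * u x ∂μ := by
    rw [integral_withDensity_eq_integral_toReal_smul₀ hgm (by simp)]
    exact integral_congr_ae (hg_eq.mono fun x hx => by simp only [smul_eq_mul, hx])
  have integrable_ν (u : α → ℝ) : Integrable u ν ↔ Integrable (fun x => g x * u x) μ := by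
    rw [integrable_withDensity_iff_integrable_smul₀' hgm (by simp)]
    exact integrable_congr (hg_eq.mono fun x hx => by simp only [smul_eq_mul, hx])
  have hmass : ν.real Set.univ = ∫ x, g x ∂μ := by
    simpa using integral_ν fun _ => 1
  have : IsFiniteMeasure ν := isFiniteMeasure_withDensity_ofReal hg.2
  have : NeZero ν := ⟨ae_neBot.1 (hνμ ▸ inferInstance)⟩
  have hf_eq : (fun x => g x * (f x / g x)) =ᵐ[μ] f :=
    hg0.mono fun x hx => mul_div_cancel₀ _ hx.ne'
  have hfp_eq : (fun x => g x * (f x / g x) ^ p) =ᵐ[μ] fun x => f x ^ p * g x ^ (1 - p) := by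
    filter_upwards [hf0, hg0] with x hfx hgx
    rw [div_rpow hfx hgx.le, rpow_sub hgx, rpow_one]
    field_simp
  have hh0 : 0 ≤ᵐ[ν] fun x => f x / g x := by
    rw [Filter.EventuallyLE, hνμ]
    filter_upwards [hf0, hg0] with x hfx hgx using div_nonneg hfx hgx.le
  rw [← integral_congr_ae hfp_eq, ← integral_ν, ← integral_congr_ae hf_eq, ← integral_ν, ← hmass,
    integral_rpow_eq_iff_ae_eq_const hp hh0 ((integrable_ν _).2 (hf.congr hf_eq.symm))
      ((integrable_ν _).2 (hfg.congr hfp_eq.symm))]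
  simp only [Filter.EventuallyEq, hνμ]
  constructor
  · rintro ⟨k, hk⟩
    have hfk : f =ᵐ[μ] fun x => k * g x := by
      filter_upwards [hk, hg0] with x hx hgx
      rw [← hx, div_mul_cancel₀ _ hgx.ne']
    obtain ⟨x, hfx, hgx, hx⟩ := (hf0.and (hg0.and hfk)).exists
    exact ⟨k, nonneg_of_mul_nonneg_left (hfx.trans_eq hx) hgx, hfk⟩
  · rintro ⟨k, -, hk⟩
    refine ⟨k, ?_⟩
    filter_upwards [hk, hg0] with x hx hgx
    rw [hx, mul_div_cancel_right₀ _ hgx.ne']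

end MeasureTheory

namespace Real

theorem rpow_one_div_eq_mul_rpow_iff {x y k r p : ℝ} (hx : 0 ≤ x) (hy : 0 ≤ y) (hk : 0 ≤ k)
    (hp : p ≠ 0) : x ^ (1 / p) = k * y ^ r ↔ x = k ^ p * y ^ (r * p) := by
  rw [one_div, rpow_inv_eq hx (by positivity) hp, mul_rpow hk (rpow_nonneg hy r), ← rpow_mul hy]

end Real

theorem reverse_holder_equality_iff_general {Ω : Type*} [MeasurableSpace Ω]
    (μ : Measure Ω) [IsProbabilityMeasure μ]
    (p : ℝ) (hp : 1 < p) (F G : Ω → ℝ)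
    (hG0 : ∀ᵐ ω ∂μ, G ω ≠ 0)
    (hF : Integrable (fun ω => |F ω| ^ (1 / p)) μ)
    (hG : Integrable (fun ω => |G ω| ^ (-(1 / (p - 1)))) μ)
    (hFG : Integrable (fun ω => |F ω * G ω|) μ) :
    (∫ ω, |F ω * G ω| ∂μ =
        (∫ ω, |F ω| ^ (1 / p) ∂μ) ^ p *
          (∫ ω, |G ω| ^ (-(1 / (p - 1))) ∂μ) ^ (-(p - 1))) ↔
      ∃ α : ℝ, 0 ≤ α ∧ ∀ᵐ ω ∂μ, |F ω| = α * |G ω| ^ (-(p / (p - 1))) := by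
  have hp0 : p ≠ 0 := by positivity
  have hp1 : p - 1 ≠ 0 := sub_ne_zero.2 hp.ne'
  have hexp : -(1 / (p - 1)) * p = -(p / (p - 1)) := by ring
  have hFG_eq : (fun ω => (|F ω| ^ (1 / p)) ^ p * (|G ω| ^ (-(1 / (p - 1)))) ^ (1 - p)) =
      fun ω => |F ω * G ω| := by
    ext ω
    rw [one_div, rpow_inv_rpow (abs_nonneg _) hp0, ← rpow_mul (abs_nonneg _),
      show -(1 / (p - 1)) * (1 - p) = 1 by field_simp; ring, rpow_one, abs_mul]
  rw [neg_sub, ← hFG_eq, integral_rpow_mul_rpow_one_sub_eq_iff hp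
    (Filter.Eventually.of_forall fun ω => rpow_nonneg (abs_nonneg _) _)
    (hG0.mono fun ω hω => rpow_pos_of_pos (abs_pos.2 hω) _) hF hG (hFG_eq ▸ hFG)]
  constructor
  · rintro ⟨k, hk, hFk⟩
    refine ⟨k ^ p, rpow_nonneg hk p, ?_⟩
    filter_upwards [hFk] with ω hω
    rwa [rpow_one_div_eq_mul_rpow_iff (abs_nonneg _) (abs_nonneg _) hk hp0, hexp] at hω
  · rintro ⟨a, ha, hFa⟩
    refine ⟨a ^ (1 / p), rpow_nonneg ha _, ?_⟩
    filter_upwards [hFa] with ω hω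
    rwa [rpow_one_div_eq_mul_rpow_iff (abs_nonneg _) (abs_nonneg _) (rpow_nonneg ha _) hp0, hexp,
      one_div, rpow_inv_rpow ha hp0]

/-- Equality case of the reverse Hölder inequality. -/
theorem reverse_holder_equality_iff {Ω : Type*} [MeasurableSpace Ω]
    (μ : Measure Ω) [IsProbabilityMeasure μ]
    (p : ℝ) (hp : 1 < p) (F G : Ω → ℝ)
    (hFm : Measurable F) (hGm : Measurable G)
    (hG0 : ∀ᵐ ω ∂μ, G ω ≠ 0)
    (hF : Integrable (fun ω => |F ω| ^ (1 / p)) μ)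
    (hG : Integrable (fun ω => |G ω| ^ (-(1 / (p - 1)))) μ)
    (hFG : Integrable (fun ω => |F ω * G ω|) μ) :
    (∫ ω, |F ω * G ω| ∂μ =
        (∫ ω, |F ω| ^ (1 / p) ∂μ) ^ p *
          (∫ ω, |G ω| ^ (-(1 / (p - 1))) ∂μ) ^ (-(p - 1))) ↔
      ∃ α : ℝ, 0 ≤ α ∧ ∀ᵐ ω ∂μ, |F ω| = α * |G ω| ^ (-(p / (p - 1))) :=
  reverse_holder_equality_iff_general μ p hp F G hG0 hF hG hFG
end

section
/- Participation constraint step: Under the assumptions of the utility bound via reverse Hölder, if additionally the participation constraint E[U_A(W - K)] ≥ U_A(y₀) = -exp(-γ_A y₀) holds, then E[U_P(X - W)] ≤ -exp(γ_P y₀) · (E[|U_P(X - K)|^{γ_A/(γ_A+γ_P)}])^{(γ_A+γ_P)/γ_A}. -/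
open MeasureTheory ProbabilityTheory Real

/-- Participation constraint step: under the participation constraint
`E[U_A(W-K)] ≥ U_A(y₀)`, one has
`E[U_P(X-W)] ≤ U_A(y₀)^{-γ_P/γ_A} · (E[|U_P(X-K)|^{γ_A/(γ_A+γ_P)}])^{(γ_A+γ_P)/γ_A}`,
where `U_A(y₀)^{-γ_P/γ_A}` is interpreted (with the sign convention making both
sides negative) as `-exp(γ_P y₀)`. -/
theorem participation_constraint_step {Ω : Type*} [MeasurableSpace Ω]
    (μ : Measure Ω) [IsProbabilityMeasure μ]
    (γP γA y₀ : ℝ) (hP : 0 < γP) (hA : 0 < γA)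
    (X W K : Ω → ℝ)
    (hXm : Measurable X) (hWm : Measurable W) (hKm : Measurable K)
    (hW : ∀ q : ℝ, q ≠ 0 → Integrable (fun ω => Real.exp (q * W ω)) μ)
    (h1 : Integrable (fun ω => Real.exp (-γP * (X ω - W ω))) μ)
    (h2 : Integrable
      (fun ω => |(-Real.exp (-γP * (X ω - K ω)))| ^ (γA / (γA + γP))) μ)
    (h3 : Integrable (fun ω => Real.exp (-γA * (W ω - K ω))) μ)
    (hPC : ∫ ω, -Real.exp (-γA * (W ω - K ω)) ∂μ ≥ -Real.exp (-γA * y₀)) :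
    ∫ ω, -Real.exp (-γP * (X ω - W ω)) ∂μ ≤
      -(Real.exp (γP * y₀) *
          (∫ ω, |(-Real.exp (-γP * (X ω - K ω)))| ^ (γA / (γA + γP)) ∂μ) ^
            ((γA + γP) / γA)) := by
  have hs : 0 < γA + γP := by linarith
  set θ : ℝ := γA / (γA + γP) with hθdef
  set p : ℝ := (γA + γP) / γA with hpdef
  set q : ℝ := (γA + γP) / γP with hqdef
  have hθ : 0 < θ := div_pos hA hs
  have hp0 : 0 < p := div_pos hs hA
  have hq0 : 0 < q := div_pos hs hP
  have hpq : p.HolderConjugate q := by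
    rw [Real.holderConjugate_iff]
    constructor
    · rw [hpdef, lt_div_iff₀ hA]; linarith
    · rw [hpdef, hqdef]
      field_simp
  have hinvp : 1 / p = θ := by
    rw [hpdef, hθdef, one_div_div]
  have hinvq : 1 / q = γP / (γA + γP) := by
    rw [hqdef, one_div_div]
  -- the two Hölder factors
  set f : Ω → ℝ := fun ω => Real.exp (-γP * (X ω - W ω) * θ) with hfdef
  set g : Ω → ℝ := fun ω => Real.exp (-γA * (W ω - K ω) * (γP / (γA + γP))) with hgdef
  have hfp : ∀ ω, f ω ^ p = Real.exp (-γP * (X ω - W ω)) := by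
    intro ω
    rw [hfdef, ← Real.exp_mul, mul_assoc, hθdef, hpdef]
    field_simp
  have hgq : ∀ ω, g ω ^ q = Real.exp (-γA * (W ω - K ω)) := by
    intro ω
    rw [hgdef, ← Real.exp_mul, mul_assoc, hqdef]
    field_simp
  have hfg : ∀ ω, |(-Real.exp (-γP * (X ω - K ω)))| ^ θ = f ω * g ω := by
    intro ω
    rw [abs_neg, abs_of_pos (Real.exp_pos _), ← Real.exp_mul, hfdef, hgdef,
      ← Real.exp_add]
    congr 1
    rw [hθdef]
    first
            | (first
            | (field_simp; ring)
            | field_simp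
            | ring)
            | field_simp
            | ring
  -- Memℒp facts
  have hfm : Measurable f := by
    apply Real.measurable_exp.comp
    exact (((measurable_const.mul (hXm.sub hWm))).mul measurable_const)
  have hgm : Measurable g := by
    apply Real.measurable_exp.comp
    exact (((measurable_const.mul (hWm.sub hKm))).mul measurable_const)
  have hmemf : MemLp f (ENNReal.ofReal p) μ := by
    have hne : ENNReal.ofReal p ≠ 0 := by
      simp [ENNReal.ofReal_eq_zero, not_le, hp0]
    have := (memLp_norm_rpow_iff (μ := μ) (p := ENNReal.ofReal p) (q := ENNReal.ofReal p)
      hfm.aestronglyMeasurable hne ENNReal.ofReal_ne_top)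
    rw [ENNReal.div_self hne ENNReal.ofReal_ne_top] at this
    rw [← this, memLp_one_iff_integrable]
    refine h1.congr ?_
    filter_upwards with ω
    rw [Real.norm_of_nonneg (Real.exp_pos _).le, ENNReal.toReal_ofReal hp0.le, hfp ω]
  have hmemg : MemLp g (ENNReal.ofReal q) μ := by
    have hne : ENNReal.ofReal q ≠ 0 := by
      simp [ENNReal.ofReal_eq_zero, not_le, hq0]
    have := (memLp_norm_rpow_iff (μ := μ) (p := ENNReal.ofReal q) (q := ENNReal.ofReal q)
      hgm.aestronglyMeasurable hne ENNReal.ofReal_ne_top)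
    rw [ENNReal.div_self hne ENNReal.ofReal_ne_top] at this
    rw [← this, memLp_one_iff_integrable]
    refine h3.congr ?_
    filter_upwards with ω
    rw [Real.norm_of_nonneg (Real.exp_pos _).le, ENNReal.toReal_ofReal hq0.le, hgq ω]
  -- Hölder
  have hHolder := integral_mul_le_Lp_mul_Lq_of_nonneg (μ := μ) hpq
    (Filter.Eventually.of_forall fun ω => (Real.exp_pos _).le)
    (Filter.Eventually.of_forall fun ω => (Real.exp_pos _).le) hmemf hmemg
  set A : ℝ := ∫ ω, Real.exp (-γP * (X ω - W ω)) ∂μ with hAdef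
  set B : ℝ := ∫ ω, Real.exp (-γA * (W ω - K ω)) ∂μ with hBdef
  set C : ℝ := ∫ ω, f ω * g ω ∂μ with hCdef
  have hAint : (∫ ω, f ω ^ p ∂μ) = A := by
    rw [hAdef]; exact integral_congr_ae (Filter.Eventually.of_forall fun ω => hfp ω)
  have hBint : (∫ ω, g ω ^ q ∂μ) = B := by
    rw [hBdef]; exact integral_congr_ae (Filter.Eventually.of_forall fun ω => hgq ω)
  rw [hAint, hBint, hinvp, hinvq] at hHolder
  have hApos : 0 < A := integral_exp_pos h1
  have hBpos : 0 < B := integral_exp_pos h3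
  have hCnonneg : 0 ≤ C := by
    apply integral_nonneg
    intro ω
    exact mul_nonneg (Real.exp_pos _).le (Real.exp_pos _).le
  -- participation constraint : B ≤ exp (-γA * y₀)
  have hB : B ≤ Real.exp (-γA * y₀) := by
    rw [integral_neg] at hPC
    linarith [hPC]
  -- raise Hölder to the power p
  have hCp : C ^ p ≤ A * B ^ (γP / γA) := by
    calc C ^ p ≤ (A ^ θ * B ^ (γP / (γA + γP))) ^ p :=
          Real.rpow_le_rpow hCnonneg hHolder hp0.le
      _ = (A ^ θ) ^ p * (B ^ (γP / (γA + γP))) ^ p :=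
          Real.mul_rpow (Real.rpow_nonneg hApos.le _) (Real.rpow_nonneg hBpos.le _)
      _ = A ^ (θ * p) * B ^ (γP / (γA + γP) * p) := by
          rw [← Real.rpow_mul hApos.le, ← Real.rpow_mul hBpos.le]
      _ = A * B ^ (γP / γA) := by
          have h1' : θ * p = 1 := by rw [hθdef, hpdef]; field_simp
          have h2' : γP / (γA + γP) * p = γP / γA := by rw [hpdef]; first
            | (field_simp; ring)
            | field_simp
            | ring
          rw [h1', h2', Real.rpow_one]
  have hBp : B ^ (γP / γA) ≤ Real.exp (-γP * y₀) := by
    calc B ^ (γP / γA) ≤ Real.exp (-γA * y₀) ^ (γP / γA) :=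
          Real.rpow_le_rpow hBpos.le hB (div_pos hP hA).le
      _ = Real.exp (-γP * y₀) := by
          rw [← Real.exp_mul]
          congr 1
          first
            | (field_simp; ring)
            | field_simp
            | ring
  have hkey : Real.exp (γP * y₀) * C ^ p ≤ A := by
    have : C ^ p ≤ A * Real.exp (-γP * y₀) := by
      calc C ^ p ≤ A * B ^ (γP / γA) := hCp
        _ ≤ A * Real.exp (-γP * y₀) := by
            exact mul_le_mul_of_nonneg_left hBp hApos.le
    calc Real.exp (γP * y₀) * C ^ p ≤ Real.exp (γP * y₀) * (A * Real.exp (-γP * y₀)) :=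
          mul_le_mul_of_nonneg_left this (Real.exp_pos _).le
      _ = A := by
          rw [← mul_assoc, mul_comm (Real.exp (γP * y₀)) A, mul_assoc, ← Real.exp_add]
          simp
  -- conclude
  have hCeq : (∫ ω, |(-Real.exp (-γP * (X ω - K ω)))| ^ θ ∂μ) = C := by
    rw [hCdef]; exact integral_congr_ae (Filter.Eventually.of_forall fun ω => hfg ω)
  rw [integral_neg, hCeq, ← hAdef]
  linarith [hkey]
end

section
/- Lower bound on the principal's utility term (Proposition 3.2, first part): Let T > 0, x₀ ∈ ℝ, γ_P, γ_A > 0, and let a = (a_t) be a nonnegative predictable process with sufficient exponential integrability. With X_T^a = x₀ + ∫₀ᵀ a_t dt + B_T where B is standard Brownian motion, one has E[|exp(-γ_P(X_T^a - ∫₀ᵀ κ(a_t)dt))|^{γ_A/(γ_A+γ_P)}]^{(γ_A+γ_P)/γ_A} ≥ exp(-γ_P x₀) · exp(T γ_P (-κ̃(1) + γ_P γ_A/(2(γ_A+γ_P)))). -/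
open MeasureTheory ProbabilityTheory Real Set
open scoped NNReal

/-!
Since `x - κ x ≤ κ̃(1)` for every `x ≥ 0`, the drift gain `∫₀ᵀ (a_t - κ(a_t)) dt` is at most
`T κ̃(1)` pathwise. Hence the integrand is bounded below by `exp (-c (x₀ + T κ̃(1)) - c B_T)`
with `c = γ_P γ_A / (γ_A + γ_P)`, whose expectation is the Gaussian moment generating function
`exp (T c² / 2)`. Raising to the power `(γ_A + γ_P) / γ_A = γ_P / c` gives the bound.
-/

lemma intervalIntegral.integral_sub_integral_le_of_sub_le {f g : ℝ → ℝ} {a b M : ℝ}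
    (hab : a ≤ b) (hf : IntervalIntegrable f volume a b) (hg : IntervalIntegrable g volume a b)
    (h : ∀ t ∈ Icc a b, f t - g t ≤ M) :
    (∫ t in a..b, f t) - ∫ t in a..b, g t ≤ (b - a) * M := by
  rw [← intervalIntegral.integral_sub hf hg, ← smul_eq_mul, ← intervalIntegral.integral_const]
  exact intervalIntegral.integral_mono_on hab (hf.sub hg) intervalIntegrable_const h

lemma abs_neg_exp_rpow (y p : ℝ) : |-exp y| ^ p = exp (y * p) := by
  rw [abs_neg, abs_exp, ← exp_mul]

lemma exp_add_le_integral_of_gaussianReal {Ω : Type*} [MeasurableSpace Ω] {μ : Measure Ω}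
    [IsProbabilityMeasure μ] {B : Ω → ℝ} {v : ℝ≥0} (hB : μ.map B = gaussianReal 0 v)
    {f : Ω → ℝ} (hf : Integrable f μ) {m t : ℝ} (hle : ∀ ω, exp (m + t * B ω) ≤ f ω) :
    exp (m + v * t ^ 2 / 2) ≤ ∫ ω, f ω ∂μ := by
  have hmgf : mgf B μ t = exp (v * t ^ 2 / 2) := by simpa using mgf_gaussianReal hB t
  have hint : Integrable (fun ω ↦ exp (t * B ω)) μ :=
    mgf_pos_iff.mp (hmgf ▸ exp_pos _)
  calc exp (m + v * t ^ 2 / 2) = ∫ ω, exp (m + t * B ω) ∂μ := by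
        simp_rw [exp_add, integral_const_mul]
        rw [← mgf, hmgf]
    _ ≤ ∫ ω, f ω ∂μ :=
        integral_mono ((hint.const_mul (exp m)).congr (.of_forall fun _ ↦ (exp_add _ _).symm))
          hf hle

theorem principal_term_lower_bound_general {Ω : Type*} [MeasurableSpace Ω]
    (μ : Measure Ω) [IsProbabilityMeasure μ]
    (T x₀ γP γA : ℝ) (hT : 0 < T) (hP : 0 < γP) (hA : 0 < γA)
    (κ : ℝ → ℝ)
    (ktilde : ℝ) (hkt : IsLUB ((fun x => x - κ x) '' Set.Ici 0) ktilde)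
    (B : Ω → ℝ) (hlaw : μ.map B = gaussianReal 0 T.toNNReal)
    (a : ℝ → Ω → ℝ) (ha0 : ∀ t ω, 0 ≤ a t ω)
    (haint : ∀ ω, IntervalIntegrable (fun t => a t ω) MeasureTheory.volume 0 T)
    (hκint : ∀ ω, IntervalIntegrable (fun t => κ (a t ω)) MeasureTheory.volume 0 T)
    (X : Ω → ℝ) (hX : ∀ ω, X ω = x₀ + (∫ t in (0 : ℝ)..T, a t ω) + B ω)
    (hint : Integrable (fun ω =>
      |(-Real.exp (-γP * (X ω - ∫ t in (0 : ℝ)..T, κ (a t ω))))| ^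
        (γA / (γA + γP))) μ) :
    (∫ ω, |(-Real.exp (-γP * (X ω - ∫ t in (0 : ℝ)..T, κ (a t ω))))| ^
          (γA / (γA + γP)) ∂μ) ^ ((γA + γP) / γA) ≥
      Real.exp (-γP * x₀) *
        Real.exp (T * γP * (-ktilde + γP * γA / (2 * (γA + γP)))) := by
  set p := γA / (γA + γP)
  set c := γP * p
  have hc : 0 ≤ c := by positivity
  have hgain : ∀ ω, (∫ t in (0 : ℝ)..T, a t ω) - ∫ t in (0 : ℝ)..T, κ (a t ω) ≤ T * ktilde :=
    fun ω ↦ by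
      simpa using intervalIntegral.integral_sub_integral_le_of_sub_le hT.le (haint ω) (hκint ω)
        fun t _ ↦ hkt.1 ⟨a t ω, ha0 t ω, rfl⟩
  have hlower : ∀ ω, exp (-c * (x₀ + T * ktilde) + -c * B ω) ≤
      |(-exp (-γP * (X ω - ∫ t in (0 : ℝ)..T, κ (a t ω))))| ^ p := fun ω ↦ by
    rw [abs_neg_exp_rpow, exp_le_exp, hX ω]
    nlinarith [mul_le_mul_of_nonneg_left (hgain ω) hc]
  have hE := exp_add_le_integral_of_gaussianReal hlaw hint hlower
  rw [coe_toNNReal _ hT.le] at hE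
  calc exp (-γP * x₀) * exp (T * γP * (-ktilde + γP * γA / (2 * (γA + γP))))
      = exp (-c * (x₀ + T * ktilde) + T * (-c) ^ 2 / 2) ^ ((γA + γP) / γA) := by
        rw [← exp_add, ← exp_mul]
        congr 1
        simp only [c, p]
        field_simp
        ring
    _ ≤ _ := by gcongr

/-- Proposition 3.2, first part: lower bound on the Principal's utility term.
For any admissible action `a` (nonnegative, with the relevant integrability), with
`X_T^a = x₀ + ∫₀ᵀ a_t dt + B_T` and `B_T ~ N(0,T)`,
`E[|U_P(X_T^a - ∫₀ᵀ κ(a_t) dt)|^{γ_A/(γ_A+γ_P)}]^{(γ_A+γ_P)/γ_A}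
  ≥ exp(-γ_P x₀) · exp(T γ_P (-κ̃(1) + γ_P γ_A/(2(γ_A+γ_P))))`,
where `κ̃(1) = sup_{x ≥ 0}(x - κ(x))`. -/
theorem principal_term_lower_bound {Ω : Type*} [MeasurableSpace Ω]
    (μ : Measure Ω) [IsProbabilityMeasure μ]
    (T x₀ γP γA : ℝ) (hT : 0 < T) (hP : 0 < γP) (hA : 0 < γA)
    (κ : ℝ → ℝ) (hconv : StrictConvexOn ℝ (Set.Ici 0) κ)
    (hcont : ContinuousOn κ (Set.Ici 0)) (hmono : MonotoneOn κ (Set.Ici 0))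
    (ktilde : ℝ) (hkt : IsLUB ((fun x => x - κ x) '' Set.Ici 0) ktilde)
    (B : Ω → ℝ) (hB : Measurable B) (hlaw : μ.map B = gaussianReal 0 T.toNNReal)
    (a : ℝ → Ω → ℝ) (ha0 : ∀ t ω, 0 ≤ a t ω)
    (haint : ∀ ω, IntervalIntegrable (fun t => a t ω) MeasureTheory.volume 0 T)
    (hκint : ∀ ω, IntervalIntegrable (fun t => κ (a t ω)) MeasureTheory.volume 0 T)
    (X : Ω → ℝ) (hX : ∀ ω, X ω = x₀ + (∫ t in (0 : ℝ)..T, a t ω) + B ω)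
    (hint : Integrable (fun ω =>
      |(-Real.exp (-γP * (X ω - ∫ t in (0 : ℝ)..T, κ (a t ω))))| ^
        (γA / (γA + γP))) μ) :
    (∫ ω, |(-Real.exp (-γP * (X ω - ∫ t in (0 : ℝ)..T, κ (a t ω))))| ^
          (γA / (γA + γP)) ∂μ) ^ ((γA + γP) / γA) ≥
      Real.exp (-γP * x₀) *
        Real.exp (T * γP * (-ktilde + γP * γA / (2 * (γA + γP)))) :=
  principal_term_lower_bound_general μ T x₀ γP γA hT hP hA κ ktilde hkt B hlaw a ha0 haint hκint X
    hX hint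
end

section
/- Upper bound on the Principal's expected utility (Proposition 3.2, second part): For any admissible contract (W, a) satisfying the participation constraint E[-exp(-γ_A(W - ∫₀ᵀ κ(a_t)dt))] ≥ -exp(-γ_A y₀), one has E[-exp(-γ_P(X_T^a - W))] ≤ -exp(-γ_P(x₀ - y₀)) · exp(γ_P T(-κ̃(1) + γ_P γ_A/(2(γ_A+γ_P)))). -/
open MeasureTheory ProbabilityTheory Real Set

open scoped NNReal

/-! The wage cancels in the convex combination `θ u + (1 - θ) v = -γP θ (X - K)` of the
principal's exponent `u = -γP (X - W)` and the agent's exponent `v = -γA (W - K)`, where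
`θ = γA / (γA + γP)`. Hölder's inequality therefore bounds `E[exp(-γP θ (X - K))]` by
`E[e^u]^θ E[e^v]^(1-θ)`, and the participation constraint bounds `E[e^v]` by `exp(-γA y₀)`.
Conversely `X - K ≤ x₀ + T κ̃ + B_T` pointwise, because `a - κ(a) ≤ κ̃`, and the Gaussian moment
generating function gives `E[exp(-s B_T)] = exp(T s² / 2)`. Comparing the two bounds and solving
for `E[e^u]` gives the claim. -/

section ExponentialMoments

variable {Ω : Type*} [MeasurableSpace Ω] {μ : Measure Ω} {u v : Ω → ℝ} {θ : ℝ}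

lemma aemeasurable_of_integrable_exp (hu : Integrable (fun ω => exp (u ω)) μ) :
    AEMeasurable u μ :=
  hu.aemeasurable.log.congr (.of_forall fun ω => log_exp (u ω))

lemma memLp_exp_mul_of_integrable_exp (hu : Integrable (fun ω => exp (u ω)) μ) (hθ : 0 < θ) :
    MemLp (fun ω => exp (θ * u ω)) (ENNReal.ofReal θ⁻¹) μ := by
  have hm : AEStronglyMeasurable (fun ω => exp (θ * u ω)) μ :=
    ((aemeasurable_of_integrable_exp hu).const_mul θ).exp.aestronglyMeasurable
  rw [← integrable_norm_rpow_iff hm (by simpa using hθ) ENNReal.ofReal_ne_top,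
    ENNReal.toReal_ofReal (inv_nonneg.2 hθ.le)]
  refine hu.congr (.of_forall fun ω => ?_)
  simp only [norm_of_nonneg (exp_pos _).le, ← exp_mul, ← div_eq_mul_inv,
    mul_div_cancel_left₀ _ hθ.ne']

lemma integrable_exp_convex_comb (hu : Integrable (fun ω => exp (u ω)) μ)
    (hv : Integrable (fun ω => exp (v ω)) μ) (hθ₀ : 0 ≤ θ) (hθ₁ : θ ≤ 1) :
    Integrable (fun ω => exp (θ * u ω + (1 - θ) * v ω)) μ := by
  refine Integrable.mono' ((hu.const_mul θ).add (hv.const_mul (1 - θ)))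
    (((aemeasurable_of_integrable_exp hu).const_mul θ).add
      ((aemeasurable_of_integrable_exp hv).const_mul (1 - θ))).exp.aestronglyMeasurable
    (.of_forall fun ω => ?_)
  rw [norm_of_nonneg (exp_pos _).le]
  exact convexOn_exp.2 (mem_univ _) (mem_univ _) hθ₀ (by linarith) (by ring)

lemma integral_exp_convex_comb_le (hu : Integrable (fun ω => exp (u ω)) μ)
    (hv : Integrable (fun ω => exp (v ω)) μ) (hθ₀ : 0 < θ) (hθ₁ : θ < 1) :
    ∫ ω, exp (θ * u ω + (1 - θ) * v ω) ∂μ ≤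
      (∫ ω, exp (u ω) ∂μ) ^ θ * (∫ ω, exp (v ω) ∂μ) ^ (1 - θ) := by
  have hθ₁' : 0 < 1 - θ := sub_pos.2 hθ₁
  have key := integral_mul_le_Lp_mul_Lq_of_nonneg
    (Real.HolderConjugate.inv_one_sub_inv hθ₀ hθ₁)
    (.of_forall fun ω => (exp_pos (θ * u ω)).le)
    (.of_forall fun ω => (exp_pos ((1 - θ) * v ω)).le)
    (memLp_exp_mul_of_integrable_exp hu hθ₀) (memLp_exp_mul_of_integrable_exp hv hθ₁')
  simp only [← exp_add, ← exp_mul, one_div, inv_inv, ← div_eq_mul_inv,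
    mul_div_cancel_left₀ _ hθ₀.ne', mul_div_cancel_left₀ _ hθ₁'.ne'] at key
  exact key

end ExponentialMoments

lemma intervalIntegral_sub_comp_le_mul {κ : ℝ → ℝ} {k T : ℝ} {a : ℝ → ℝ}
    (hk : k ∈ upperBounds ((fun x => x - κ x) '' Ici 0)) (hT : 0 ≤ T) (ha₀ : ∀ t, 0 ≤ a t)
    (ha : IntervalIntegrable a volume 0 T)
    (hκa : IntervalIntegrable (fun t => κ (a t)) volume 0 T) :
    (∫ t in 0..T, a t) - ∫ t in 0..T, κ (a t) ≤ T * k := by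
  rw [← intervalIntegral.integral_sub ha hκa]
  calc ∫ t in 0..T, a t - κ (a t) ≤ ∫ _ in 0..T, k :=
        intervalIntegral.integral_mono_on hT (ha.sub hκa) intervalIntegrable_const
          fun t _ => hk ⟨a t, ha₀ t, rfl⟩
    _ = T * k := by simp

lemma exp_le_integral_exp_neg_mul_of_le_add_gaussian {Ω : Type*} [MeasurableSpace Ω]
    {μ : Measure Ω} {Y B : Ω → ℝ} {c s : ℝ} {v : ℝ≥0} (hB : Measurable B)
    (hlaw : μ.map B = gaussianReal 0 v) (hY : ∀ ω, Y ω ≤ c + B ω) (hs : 0 ≤ s)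
    (hint : Integrable (fun ω => exp (-s * Y ω)) μ) :
    exp (-s * c + v * s ^ 2 / 2) ≤ ∫ ω, exp (-s * Y ω) ∂μ := by
  have hBint : Integrable (fun ω => exp (-s * B ω)) μ := by
    refine (integrable_map_measure ?_ hB.aemeasurable).1
      (hlaw ▸ integrable_exp_mul_gaussianReal _)
    exact (measurable_const.mul measurable_id).exp.aestronglyMeasurable
  calc exp (-s * c + v * s ^ 2 / 2) = ∫ ω, exp (-s * c) * exp (-s * B ω) ∂μ := by
        rw [integral_const_mul, ← mgf, mgf_gaussianReal hlaw, ← exp_add]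
        ring_nf
    _ ≤ ∫ ω, exp (-s * Y ω) ∂μ :=
        integral_mono (hBint.const_mul _) hint fun ω => by
          rw [← exp_add, exp_le_exp]
          nlinarith [hY ω]

lemma exp_div_le_of_exp_le_rpow_mul_exp {L u w θ : ℝ} (hθ : 0 < θ) (hL : 0 ≤ L)
    (h : exp u ≤ L ^ θ * exp w) : exp ((u - w) / θ) ≤ L := by
  have hsub : exp (u - w) ≤ L ^ θ := by rwa [exp_sub, div_le_iff₀ (exp_pos _)]
  calc exp ((u - w) / θ) = exp (u - w) ^ θ⁻¹ := by rw [← exp_mul, div_eq_mul_inv]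
    _ ≤ (L ^ θ) ^ θ⁻¹ := rpow_le_rpow (exp_pos _).le hsub (inv_nonneg.2 hθ.le)
    _ = L := rpow_rpow_inv hL hθ.ne'

theorem principal_utility_upper_bound_general {Ω : Type*} [MeasurableSpace Ω]
    (μ : Measure Ω)
    (T x₀ y₀ γP γA : ℝ) (hT : 0 < T) (hP : 0 < γP) (hA : 0 < γA)
    (κ : ℝ → ℝ)
    (ktilde : ℝ) (hkt : IsLUB ((fun x => x - κ x) '' Set.Ici 0) ktilde)
    (B : Ω → ℝ) (hB : Measurable B) (hlaw : μ.map B = gaussianReal 0 T.toNNReal)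
    (a : ℝ → Ω → ℝ) (ha0 : ∀ t ω, 0 ≤ a t ω)
    (haint : ∀ ω, IntervalIntegrable (fun t => a t ω) MeasureTheory.volume 0 T)
    (hκint : ∀ ω, IntervalIntegrable (fun t => κ (a t ω)) MeasureTheory.volume 0 T)
    (X : Ω → ℝ) (hX : ∀ ω, X ω = x₀ + (∫ t in (0 : ℝ)..T, a t ω) + B ω)
    (Kc : Ω → ℝ) (hKc : ∀ ω, Kc ω = ∫ t in (0 : ℝ)..T, κ (a t ω))
    (W : Ω → ℝ)
    (h1 : Integrable (fun ω => Real.exp (-γP * (X ω - W ω))) μ)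
    (h3 : Integrable (fun ω => Real.exp (-γA * (W ω - Kc ω))) μ)
    (hPC : ∫ ω, -Real.exp (-γA * (W ω - Kc ω)) ∂μ ≥ -Real.exp (-γA * y₀)) :
    ∫ ω, -Real.exp (-γP * (X ω - W ω)) ∂μ ≤
      -Real.exp (-γP * (x₀ - y₀)) *
        Real.exp (γP * T * (-ktilde + γP * γA / (2 * (γA + γP)))) := by
  set θ := γA / (γA + γP) with hθ
  have hθ₀ : 0 < θ := by positivity
  have hθ₁ : θ < 1 := (div_lt_one (by positivity)).2 (by linarith)
  have hmix : ∀ ω, θ * (-γP * (X ω - W ω)) + (1 - θ) * (-γA * (W ω - Kc ω)) =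
      -(γP * θ) * (X ω - Kc ω) := fun ω => by rw [hθ]; field_simp; ring
  have hXKc : ∀ ω, X ω - Kc ω ≤ (x₀ + T * ktilde) + B ω := fun ω => by
    have := intervalIntegral_sub_comp_le_mul hkt.1 hT.le (ha0 · ω) (haint ω) (hκint ω)
    rw [hX, hKc]; linarith
  have hint := integrable_exp_convex_comb h1 h3 hθ₀.le hθ₁.le
  have hHolder := integral_exp_convex_comb_le h1 h3 hθ₀ hθ₁
  simp only [hmix] at hint hHolder
  have hlower := exp_le_integral_exp_neg_mul_of_le_add_gaussian hB hlaw hXKc (by positivity) hint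
  have hL : 0 ≤ ∫ ω, exp (-γP * (X ω - W ω)) ∂μ := integral_nonneg fun _ => (exp_pos _).le
  have hPC' :
      (∫ ω, exp (-γA * (W ω - Kc ω)) ∂μ) ^ (1 - θ) ≤ exp (-γA * y₀ * (1 - θ)) := by
    rw [exp_mul]
    exact rpow_le_rpow (integral_nonneg fun _ => (exp_pos _).le)
      (by rwa [ge_iff_le, integral_neg, neg_le_neg_iff] at hPC) (by linarith)
  have hL_lower := exp_div_le_of_exp_le_rpow_mul_exp hθ₀ hL
    (hlower.trans (hHolder.trans (mul_le_mul_of_nonneg_left hPC' (rpow_nonneg hL _))))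
  rw [integral_neg, neg_mul, neg_le_neg_iff, ← exp_add]
  refine le_of_eq_of_le ?_ hL_lower
  rw [Real.coe_toNNReal T hT.le, hθ]
  congr 1
  field_simp
  ring

/-- Proposition 3.2, second part: upper bound on the Principal's expected utility.
For any admissible contract `(W, a)` satisfying the participation constraint
`E[-exp(-γ_A(W - ∫₀ᵀ κ(a_t)dt))] ≥ -exp(-γ_A y₀)`, one has
`E[-exp(-γ_P(X_T^a - W))]
  ≤ -exp(-γ_P(x₀ - y₀)) · exp(γ_P T (-κ̃(1) + γ_P γ_A/(2(γ_A+γ_P))))`. -/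
theorem principal_utility_upper_bound {Ω : Type*} [MeasurableSpace Ω]
    (μ : Measure Ω) [IsProbabilityMeasure μ]
    (T x₀ y₀ γP γA : ℝ) (hT : 0 < T) (hP : 0 < γP) (hA : 0 < γA)
    (κ : ℝ → ℝ) (hconv : StrictConvexOn ℝ (Set.Ici 0) κ)
    (hcont : ContinuousOn κ (Set.Ici 0)) (hmono : MonotoneOn κ (Set.Ici 0))
    (ktilde : ℝ) (hkt : IsLUB ((fun x => x - κ x) '' Set.Ici 0) ktilde)
    (B : Ω → ℝ) (hB : Measurable B) (hlaw : μ.map B = gaussianReal 0 T.toNNReal)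
    (a : ℝ → Ω → ℝ) (ha0 : ∀ t ω, 0 ≤ a t ω)
    (haint : ∀ ω, IntervalIntegrable (fun t => a t ω) MeasureTheory.volume 0 T)
    (hκint : ∀ ω, IntervalIntegrable (fun t => κ (a t ω)) MeasureTheory.volume 0 T)
    (X : Ω → ℝ) (hX : ∀ ω, X ω = x₀ + (∫ t in (0 : ℝ)..T, a t ω) + B ω)
    (Kc : Ω → ℝ) (hKc : ∀ ω, Kc ω = ∫ t in (0 : ℝ)..T, κ (a t ω))
    (W : Ω → ℝ) (hWm : Measurable W) (hXm : Measurable X) (hKm : Measurable Kc)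
    (hW : ∀ q : ℝ, q ≠ 0 → Integrable (fun ω => Real.exp (q * W ω)) μ)
    (h1 : Integrable (fun ω => Real.exp (-γP * (X ω - W ω))) μ)
    (h2 : Integrable
      (fun ω => |(-Real.exp (-γP * (X ω - Kc ω)))| ^ (γA / (γA + γP))) μ)
    (h3 : Integrable (fun ω => Real.exp (-γA * (W ω - Kc ω))) μ)
    (hPC : ∫ ω, -Real.exp (-γA * (W ω - Kc ω)) ∂μ ≥ -Real.exp (-γA * y₀)) :
    ∫ ω, -Real.exp (-γP * (X ω - W ω)) ∂μ ≤
      -Real.exp (-γP * (x₀ - y₀)) *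
        Real.exp (γP * T * (-ktilde + γP * γA / (2 * (γA + γP)))) :=
  principal_utility_upper_bound_general μ T x₀ y₀ γP γA hT hP hA κ ktilde hkt B hB hlaw a ha0 haint
    hκint X hX Kc hKc W h1 h3 hPC
end

section
/- Participation constraint for affine wages (Theorem 3.5(i), second part): Let W = (γ_P/(γ_A+γ_P))X_T^{a*} + β with X_T^{a*} = x₀ + Tκ*(1) + B_T, B_T ~ N(0,T). Then E[-exp(-γ_A(W - Tκ(κ*(1))))] ≥ -exp(-γ_A y₀) if and only if β ≥ β*, where β* = T γ_A γ_P²/(2(γ_A+γ_P)²) + y₀ + T κ(κ*(1)) - (γ_P/(γ_A+γ_P))(x₀ + T κ*(1)). -/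
open MeasureTheory ProbabilityTheory Real

/-!
Under exponential (CARA) utility with risk aversion `γ`, a wage that is affine in a Gaussian
variable has the closed-form expected utility `-exp (-γ · CE)`, where the certainty equivalent
`CE` is its mean minus the risk premium `γ · variance / 2`; this is the Gaussian moment generating
function `E[exp (λ B_T)] = exp (λ² T / 2)`. Since `-exp (-γ ·)` is increasing, the participation
constraint is `y₀ ≤ CE`, which is linear in `β`.
-/

theorem integral_neg_exp_neg_mul_affine_of_map_eq_gaussianReal {Ω : Type*} [MeasurableSpace Ω]
    {p : Measure Ω} {X : Ω → ℝ} {m : ℝ} {v : NNReal} (hX : p.map X = gaussianReal m v)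
    (γ a c : ℝ) :
    ∫ ω, -exp (-γ * (a + c * X ω)) ∂p = -exp (-γ * (a + c * m - γ * c ^ 2 * v / 2)) := by
  have hsplit : ∀ ω, exp (-γ * (a + c * X ω)) = exp (-γ * a) * exp (-γ * c * X ω) := by
    intro ω
    rw [← exp_add]
    ring_nf
  simp_rw [hsplit]
  rw [integral_neg, integral_const_mul, ← mgf, mgf_gaussianReal hX, ← exp_add]
  ring_nf

theorem neg_exp_neg_mul_le_neg_exp_neg_mul_iff {γ : ℝ} (hγ : 0 < γ) (x y : ℝ) :
    -exp (-γ * x) ≤ -exp (-γ * y) ↔ x ≤ y := by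
  rw [neg_le_neg_iff, exp_le_exp, neg_mul, neg_mul, neg_le_neg_iff,
    mul_le_mul_iff_of_pos_left hγ]

theorem participation_constraint_affine_general {Ω : Type*} [MeasurableSpace Ω]
    (μ : Measure Ω)
    (T x₀ y₀ γP γA κs1 β : ℝ) (hT : 0 < T) (hA : 0 < γA)
    (κ : ℝ → ℝ)
    (B : Ω → ℝ) (hlaw : μ.map B = gaussianReal 0 T.toNNReal)
    (X W : Ω → ℝ) (hX : ∀ ω, X ω = x₀ + T * κs1 + B ω)
    (hW : ∀ ω, W ω = γP / (γA + γP) * X ω + β) :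
    (∫ ω, -Real.exp (-γA * (W ω - T * κ κs1)) ∂μ ≥ -Real.exp (-γA * y₀)) ↔
      β ≥ T * γA * γP ^ 2 / (2 * (γA + γP) ^ 2) + y₀ + T * κ κs1 -
        γP / (γA + γP) * (x₀ + T * κs1) := by
  set r := γP / (γA + γP)
  have hwage : ∀ ω, W ω - T * κ κs1 = (r * (x₀ + T * κs1) + β - T * κ κs1) + r * B ω := by
    intro ω
    rw [hW, hX]
    ring
  have hpremium : T * γA * γP ^ 2 / (2 * (γA + γP) ^ 2) = γA * r ^ 2 * T / 2 := by
    rw [div_pow, mul_comm 2, ← div_div]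
    ring
  simp_rw [hwage]
  rw [integral_neg_exp_neg_mul_affine_of_map_eq_gaussianReal hlaw, Real.coe_toNNReal T hT.le,
    ge_iff_le, neg_exp_neg_mul_le_neg_exp_neg_mul_iff hA, hpremium]
  constructor <;> intro h <;> linarith

/-- Theorem 3.5(i), second part: for the affine wage
`W = (γ_P/(γ_A+γ_P)) X_T^{a*} + β` with `X_T^{a*} = x₀ + T κ*(1) + B_T`, `B_T ~ N(0,T)`,
the participation constraint `E[-exp(-γ_A(W - Tκ(κ*(1))))] ≥ -exp(-γ_A y₀)` holds iff
`β ≥ β* := T γ_A γ_P²/(2(γ_A+γ_P)²) + y₀ + T κ(κ*(1)) - (γ_P/(γ_A+γ_P))(x₀ + T κ*(1))`. -/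
theorem participation_constraint_affine {Ω : Type*} [MeasurableSpace Ω]
    (μ : Measure Ω) [IsProbabilityMeasure μ]
    (T x₀ y₀ γP γA κs1 β : ℝ) (hT : 0 < T) (hP : 0 < γP) (hA : 0 < γA)
    (κ : ℝ → ℝ)
    (B : Ω → ℝ) (hB : Measurable B) (hlaw : μ.map B = gaussianReal 0 T.toNNReal)
    (X W : Ω → ℝ) (hX : ∀ ω, X ω = x₀ + T * κs1 + B ω)
    (hW : ∀ ω, W ω = γP / (γA + γP) * X ω + β) :
    (∫ ω, -Real.exp (-γA * (W ω - T * κ κs1)) ∂μ ≥ -Real.exp (-γA * y₀)) ↔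
      β ≥ T * γA * γP ^ 2 / (2 * (γA + γP) ^ 2) + y₀ + T * κ κs1 -
        γP / (γA + γP) * (x₀ + T * κs1) :=
  participation_constraint_affine_general μ T x₀ y₀ γP γA κs1 β hT hA κ B hlaw X W hX hW
end

section
/- Value of the optimal contract (Theorem 3.5(ii) / equation for the value): With W* = (γ_P/(γ_A+γ_P))X_T^{a*} + β* and a*_t = κ*(1), one has the explicit value E[-exp(-γ_P(X_T^{a*} - W*))] = -exp(-γ_P(x₀ - y₀)) · exp(γ_P T(-κ̃(1) + γ_P γ_A/(2(γ_A+γ_P)))). In particular (W*, a*) attains the upper bound of Proposition 3.2 and is hence optimal for the risk-sharing problem. -/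
open MeasureTheory ProbabilityTheory Real

/-- For Gaussian wealth, the certainty equivalent of CARA utility is the mean minus `γ/2` times
the variance. -/
theorem integral_neg_exp_affine_of_map_eq_gaussianReal {Ω : Type*} [MeasurableSpace Ω]
    {μ : Measure Ω} {B : Ω → ℝ} {m : ℝ} {v : NNReal} (hB : μ.map B = gaussianReal m v)
    (γ a b : ℝ) :
    ∫ ω, -exp (-γ * (a + b * B ω)) ∂μ = -exp (-γ * (a + b * m) + γ ^ 2 * b ^ 2 * v / 2) := by
  have hsplit : ∀ ω, -exp (-γ * (a + b * B ω)) = -(exp (-γ * a) * exp (-γ * b * B ω)) := by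
    intro ω
    rw [← exp_add]
    ring_nf
  simp_rw [hsplit, integral_neg, integral_const_mul]
  rw [← mgf, mgf_gaussianReal hB, ← exp_add]
  ring_nf

theorem optimal_contract_value_general {Ω : Type*} [MeasurableSpace Ω]
    (μ : Measure Ω)
    (T x₀ y₀ γP γA κs1 : ℝ) (hT : 0 < T) (hP : 0 < γP) (hA : 0 < γA)
    (κ : ℝ → ℝ)
    (B : Ω → ℝ) (hlaw : μ.map B = gaussianReal 0 T.toNNReal)
    (X Wstar : Ω → ℝ) (hX : ∀ ω, X ω = x₀ + T * κs1 + B ω)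
    (hWstar : ∀ ω, Wstar ω = γP / (γA + γP) * X ω +
      (T * γA * γP ^ 2 / (2 * (γA + γP) ^ 2) + y₀ + T * κ κs1 -
        γP / (γA + γP) * (x₀ + T * κs1))) :
    ∫ ω, -Real.exp (-γP * (X ω - Wstar ω)) ∂μ =
      -Real.exp (-γP * (x₀ - y₀)) *
        Real.exp (γP * T * (-(κs1 - κ κs1) + γP * γA / (2 * (γA + γP)))) := by
  have hsum : γA + γP ≠ 0 := by positivity
  have hretained : ∀ ω, X ω - Wstar ω =
      (x₀ + T * κs1 - T * γA * γP ^ 2 / (2 * (γA + γP) ^ 2) - y₀ - T * κ κs1) +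
        γA / (γA + γP) * B ω := by
    intro ω
    rw [hWstar ω, hX ω]
    field_simp
    ring
  simp_rw [hretained]
  rw [integral_neg_exp_affine_of_map_eq_gaussianReal hlaw, Real.coe_toNNReal T hT.le,
    neg_mul (exp _), ← exp_add]
  congr 2
  field_simp
  ring

/-- Theorem 3.5(ii): value of the optimal contract. With the optimal action
`a*_t = κ*(1)`, `X_T^{a*} = x₀ + T κ*(1) + B_T`, `B_T ~ N(0,T)`, and the optimal wage
`W* = (γ_P/(γ_A+γ_P)) X_T^{a*} + β*`, where
`β* = T γ_A γ_P²/(2(γ_A+γ_P)²) + y₀ + T κ(κ*(1)) - (γ_P/(γ_A+γ_P))(x₀ + T κ*(1))`,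
one has
`E[-exp(-γ_P(X_T^{a*} - W*))]
  = -exp(-γ_P(x₀-y₀)) · exp(γ_P T(-κ̃(1) + γ_P γ_A/(2(γ_A+γ_P))))`,
with `κ̃(1) = κ*(1) - κ(κ*(1))`; i.e. `(W*, a*)` attains the upper bound of
Proposition 3.2 and is hence optimal. -/
theorem optimal_contract_value {Ω : Type*} [MeasurableSpace Ω]
    (μ : Measure Ω) [IsProbabilityMeasure μ]
    (T x₀ y₀ γP γA κs1 : ℝ) (hT : 0 < T) (hP : 0 < γP) (hA : 0 < γA)
    (κ : ℝ → ℝ)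
    (B : Ω → ℝ) (hB : Measurable B) (hlaw : μ.map B = gaussianReal 0 T.toNNReal)
    (X Wstar : Ω → ℝ) (hX : ∀ ω, X ω = x₀ + T * κs1 + B ω)
    (hWstar : ∀ ω, Wstar ω = γP / (γA + γP) * X ω +
      (T * γA * γP ^ 2 / (2 * (γA + γP) ^ 2) + y₀ + T * κ κs1 -
        γP / (γA + γP) * (x₀ + T * κs1))) :
    ∫ ω, -Real.exp (-γP * (X ω - Wstar ω)) ∂μ =
      -Real.exp (-γP * (x₀ - y₀)) *
        Real.exp (γP * T * (-(κs1 - κ κs1) + γP * γA / (2 * (γA + γP)))) :=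
  optimal_contract_value_general μ T x₀ y₀ γP γA κs1 hT hP hA κ B hlaw X Wstar hX hWstar
end
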